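/- arXiv:1609.00467 — 3 statements merged into one kernel-verified Lean document; each statement's English description precedes it below -/
import Mathlib

section
/- (Pointwise complexity of the PMM.) For every k ≥ 1: the inclusions 0 ∈ ∂g(v_j)+C*x_j and 0 ∈ ∂f(u_j)+M*y_j hold for all 1 ≤ j ≤ k, and there exists an index 1 ≤ i ≤ k such that ‖Mu_i+Cv_i−d‖ ≤ 2d_0/((1−ρ̄)τ√k) and ‖x_i−y_i‖ ≤ 2d_0/((1−ρ̄)τ√k), where τ = min{λ, 1/λ} and d_0 is the distance from (z_0,w_0) to the extended solution set S_e. -/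
open scoped RealInnerProductSpace

noncomputable section

/-- `w` is a subgradient of the extended-real-valued function `φ` at `x`. -/
def HasSubgrad {E : Type*} [NormedAddCommGroup E] [InnerProductSpace ℝ E]
    (φ : E → EReal) (w x : E) : Prop :=
  ∀ x' : E, φ x + ((⟪w, x' - x⟫ : ℝ) : EReal) ≤ φ x'

/-- `w` is an `ε`-subgradient of `φ` at `x`. -/
def HasESubgrad {E : Type*} [NormedAddCommGroup E] [InnerProductSpace ℝ E]
    (φ : E → EReal) (ε : ℝ) (w x : E) : Prop :=
  ∀ x' : E, φ x + ((⟪w, x' - x⟫ : ℝ) : EReal) - (ε : EReal) ≤ φ x'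

/-- Convexity for an extended-real-valued function. -/
def ConvexE {E : Type*} [NormedAddCommGroup E] [InnerProductSpace ℝ E]
    (φ : E → EReal) : Prop :=
  ∀ x y : E, ∀ a b : ℝ, 0 ≤ a → 0 ≤ b → a + b = 1 →
    φ (a • x + b • y) ≤ (a : EReal) * φ x + (b : EReal) * φ y

/-- Proper closed convex function with values in `(-∞, ∞]`. -/
def IsPCC {E : Type*} [NormedAddCommGroup E] [InnerProductSpace ℝ E]
    (φ : E → EReal) : Prop :=
  (∀ x, φ x ≠ ⊥) ∧ (∃ x, φ x ≠ ⊤) ∧ LowerSemicontinuous φ ∧ ConvexE φ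

/-- Fenchel conjugate. -/
def fconj {E : Type*} [NormedAddCommGroup E] [InnerProductSpace ℝ E]
    (φ : E → EReal) (w : E) : EReal :=
  ⨆ x : E, ((⟪w, x⟫ : ℝ) : EReal) - φ x

/-- Lagrangian of `min { f u + g v : M u + C v = d }`. -/
def Lag {E₁ E₂ F : Type*} [NormedAddCommGroup E₁] [InnerProductSpace ℝ E₁]
    [NormedAddCommGroup E₂] [InnerProductSpace ℝ E₂]
    [NormedAddCommGroup F] [InnerProductSpace ℝ F]
    (f : E₁ → EReal) (g : E₂ → EReal) (M : E₁ →ₗ[ℝ] F) (C : E₂ →ₗ[ℝ] F) (d : F)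
    (u : E₁) (v : E₂) (z : F) : EReal :=
  f u + g v + ((⟪M u + C v - d, z⟫ : ℝ) : EReal)

/-- Saddle point of the Lagrangian. -/
def IsSaddle {E₁ E₂ F : Type*} [NormedAddCommGroup E₁] [InnerProductSpace ℝ E₁]
    [NormedAddCommGroup E₂] [InnerProductSpace ℝ E₂]
    [NormedAddCommGroup F] [InnerProductSpace ℝ F]
    (f : E₁ → EReal) (g : E₂ → EReal) (M : E₁ →ₗ[ℝ] F) (C : E₂ →ₗ[ℝ] F) (d : F)
    (us : E₁) (vs : E₂) (zs : F) : Prop :=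
  Lag f g M C d us vs zs ≠ ⊤ ∧ Lag f g M C d us vs zs ≠ ⊥ ∧
  (∀ u v, Lag f g M C d us vs zs ≤ Lag f g M C d u v zs) ∧
  (∀ ζ, Lag f g M C d us vs ζ ≤ Lag f g M C d us vs zs)

/-- `h₁(z) = f*(-M* z)`. -/
def hOne {E₁ F : Type*} [NormedAddCommGroup E₁] [InnerProductSpace ℝ E₁]
    [FiniteDimensional ℝ E₁] [NormedAddCommGroup F] [InnerProductSpace ℝ F]
    [FiniteDimensional ℝ F] (f : E₁ → EReal) (M : E₁ →ₗ[ℝ] F) (z : F) : EReal :=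
  fconj f (-(LinearMap.adjoint M z))

/-- `h₂(z) = g*(-C* z) + ⟪d, z⟫`. -/
def hTwo {E₂ F : Type*} [NormedAddCommGroup E₂] [InnerProductSpace ℝ E₂]
    [FiniteDimensional ℝ E₂] [NormedAddCommGroup F] [InnerProductSpace ℝ F]
    [FiniteDimensional ℝ F] (g : E₂ → EReal) (C : E₂ →ₗ[ℝ] F) (d : F) (z : F) : EReal :=
  fconj g (-(LinearMap.adjoint C z)) + ((⟪d, z⟫ : ℝ) : EReal)

/-- The extended solution set `S_e(∂h₁, ∂h₂)`. -/
def extSolSet {E₁ E₂ F : Type*} [NormedAddCommGroup E₁] [InnerProductSpace ℝ E₁]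
    [FiniteDimensional ℝ E₁] [NormedAddCommGroup E₂] [InnerProductSpace ℝ E₂]
    [FiniteDimensional ℝ E₂] [NormedAddCommGroup F] [InnerProductSpace ℝ F]
    [FiniteDimensional ℝ F]
    (f : E₁ → EReal) (g : E₂ → EReal) (M : E₁ →ₗ[ℝ] F) (C : E₂ →ₗ[ℝ] F) (d : F) :
    Set (F × F) :=
  {p | HasSubgrad (hOne f M) (-p.2) p.1 ∧ HasSubgrad (hTwo g C d) p.2 p.1}

/-!
The subproblem optimality conditions give `-C* x_k ∈ ∂g(v_k)` and `-M* y_k ∈ ∂f(u_k)`, and by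
Fenchel–Young these become `d - C v_k ∈ ∂h₂(x_k)` and `-M u_k ∈ ∂h₁(y_k)`. Monotonicity of `∂h₁`
and `∂h₂` against any `(p₁, p₂) ∈ S_e` places `S_e` in a half-space whose normal is
`(a_k, -λ b_k)`, with `a_k = M u_k + C v_k - d` and `b_k = w_{k-1} - M u_k`, and the update is the
`ρ_k`-relaxed projection of `(z_{k-1}, w_{k-1})` onto it. Hence the squared distance to every
point of `S_e` drops by at least `((1 - ρ̄) τ / 2)² (‖a_k‖² + λ² ‖b_k‖²)` per step; summing, the
best of the first `k` steps has this quantity at most `d₀² / k`, and the saddle point supplies the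
point `(z*, M u*) ∈ S_e` that makes `d₀` a genuine infimum.
-/

theorem EReal.exists_eq_coe {x : EReal} (h₁ : x ≠ ⊤) (h₂ : x ≠ ⊥) : ∃ r : ℝ, x = r :=
  ⟨x.toReal, (EReal.coe_toReal h₁ h₂).symm⟩

theorem EReal.add_coe_sub_le {x y : EReal} {a b : ℝ} (h : x + a ≤ y + b) :
    x + ((a - b : ℝ) : EReal) ≤ y := by
  have h' := add_le_add h (le_refl ((-b : ℝ) : EReal))
  rwa [add_assoc, add_assoc, ← EReal.coe_add, ← EReal.coe_add, add_neg_cancel, EReal.coe_zero,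
    add_zero, ← sub_eq_add_neg] at h'

open Filter Topology in
theorem nonpos_of_forall_le_mul {c K : ℝ} (h : ∀ t : ℝ, 0 < t → t ≤ 1 → c ≤ t * K) : c ≤ 0 := by
  have hlim : Tendsto (fun t : ℝ => t * K) (𝓝[>] 0) (𝓝 0) := by
    simpa using (tendsto_id.mul_const K).mono_left (nhdsWithin_le_nhds (a := (0 : ℝ)))
  refine ge_of_tendsto hlim ?_
  filter_upwards [Ioc_mem_nhdsGT one_pos] with t ht using h t ht.1 ht.2

theorem sum_Icc_le_sub_of_forall_add_le {e s : ℕ → ℝ} (h : ∀ j, 1 ≤ j → e j + s j ≤ e (j - 1))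
    (k : ℕ) : ∑ j ∈ Finset.Icc 1 k, s j ≤ e 0 - e k := by
  induction k with
  | zero => simp
  | succ k ih =>
    rw [Finset.sum_Icc_succ_top (Nat.le_add_left 1 k)]
    have := h (k + 1) (Nat.le_add_left 1 k)
    rw [Nat.add_sub_cancel] at this
    linarith

theorem exists_forall_mul_le_of_forall_add_le {α : Type*} {t : Set α} {e : α → ℕ → ℝ}
    {s : ℕ → ℝ} (he : ∀ p ∈ t, ∀ j, 0 ≤ e p j)
    (h : ∀ p ∈ t, ∀ j, 1 ≤ j → e p j + s j ≤ e p (j - 1)) {k : ℕ} (hk : 1 ≤ k) :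
    ∃ i, 1 ≤ i ∧ i ≤ k ∧ ∀ p ∈ t, k * s i ≤ e p 0 := by
  obtain ⟨i, hi, hmin⟩ := (Finset.Icc 1 k).exists_min_image s ⟨1, Finset.mem_Icc.2 ⟨le_rfl, hk⟩⟩
  obtain ⟨hi₁, hik⟩ := Finset.mem_Icc.1 hi
  refine ⟨i, hi₁, hik, fun p hp => ?_⟩
  have hsum := (Finset.Icc 1 k).card_nsmul_le_sum s (s i) hmin
  rw [Nat.card_Icc, Nat.add_sub_cancel, nsmul_eq_mul] at hsum
  linarith [sum_Icc_le_sub_of_forall_add_le (h p hp) k, he p hp k]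

theorem le_div_sInf_image_sqrt {α : Type*} {t : Set α} (ht : t.Nonempty) {e : α → ℝ} {K q : ℝ}
    (hK : 0 < K) (h : ∀ p ∈ t, (K * q) ^ 2 ≤ e p) :
    q ≤ sInf ((fun p => √(e p)) '' t) / K := by
  rw [le_div_iff₀ hK, mul_comm]
  exact le_csInf (ht.image _) (Set.forall_mem_image.2 fun p hp => Real.le_sqrt_of_sq_le (h p hp))

section Subgradient

variable {E : Type*} [NormedAddCommGroup E] [InnerProductSpace ℝ E]

theorem HasSubgrad.inner_sub_nonneg {φ : E → EReal} {w₁ w₂ x₁ x₂ : E} {r : ℝ}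
    (hx₁ : φ x₁ = r) (h₁ : HasSubgrad φ w₁ x₁) (h₂ : HasSubgrad φ w₂ x₂) :
    0 ≤ ⟪w₁ - w₂, x₁ - x₂⟫ := by
  have h₁₂ := h₁ x₂
  have h₂₁ := h₂ x₁
  rw [hx₁] at h₁₂ h₂₁
  induction hx₂ : φ x₂ using EReal.rec with
  | bot => simp [hx₂] at h₁₂
  | top => simp [hx₂] at h₂₁
  | coe s =>
    rw [hx₂] at h₁₂ h₂₁
    norm_cast at h₁₂ h₂₁
    have : ⟪w₁, x₂ - x₁⟫ = -⟪w₁, x₁ - x₂⟫ := by rw [← inner_neg_right, neg_sub]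
    rw [inner_sub_left]
    linarith

theorem inner_sub_le_fconj (φ : E → EReal) (ξ x : E) : ((⟪ξ, x⟫ : ℝ) : EReal) - φ x ≤ fconj φ ξ :=
  le_iSup (fun x => ((⟪ξ, x⟫ : ℝ) : EReal) - φ x) x

theorem HasSubgrad.fconj_eq {φ : E → EReal} {ξ x : E} {r : ℝ} (hx : φ x = r)
    (h : HasSubgrad φ ξ x) : fconj φ ξ = ((⟪ξ, x⟫ - r : ℝ) : EReal) := by
  refine le_antisymm (iSup_le fun x' => ?_) (by simpa [hx] using inner_sub_le_fconj φ ξ x)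
  have hx' := h x'
  rw [hx] at hx'
  induction hφx' : φ x' using EReal.rec with
  | bot => simp [hφx'] at hx'
  | top => simp
  | coe s =>
    rw [hφx'] at hx'
    norm_cast at hx' ⊢
    rw [inner_sub_right] at hx'
    linarith

theorem HasSubgrad.hasSubgrad_fconj {φ : E → EReal} {ξ x : E} {r : ℝ} (hx : φ x = r)
    (h : HasSubgrad φ ξ x) : HasSubgrad (fconj φ) x ξ := by
  intro ξ'
  refine le_trans (le_of_eq ?_) (inner_sub_le_fconj φ ξ' x)
  rw [h.fconj_eq hx, hx]
  norm_cast
  rw [inner_sub_right, real_inner_comm x ξ', real_inner_comm x ξ]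
  ring

theorem HasSubgrad.comp_linearMap {F : Type*} [NormedAddCommGroup F] [InnerProductSpace ℝ F]
    [FiniteDimensional ℝ E] [FiniteDimensional ℝ F] {ψ : E → EReal} {T : F →ₗ[ℝ] E} {w : E} {y : F}
    (h : HasSubgrad ψ w (T y)) : HasSubgrad (fun z => ψ (T z)) (LinearMap.adjoint T w) y := by
  intro z
  simpa [LinearMap.adjoint_inner_left, map_sub] using h (T z)

theorem HasSubgrad.add_inner {ψ : E → EReal} {w y : E} (h : HasSubgrad ψ w y) (d : E) :
    HasSubgrad (fun z => ψ z + ((⟪d, z⟫ : ℝ) : EReal)) (w + d) y := by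
  intro z
  have key : ((⟪d, y⟫ : ℝ) : EReal) + ⟪w + d, z - y⟫ = ((⟪w, z - y⟫ : ℝ) : EReal) + ⟪d, z⟫ := by
    norm_cast
    rw [inner_add_left, inner_sub_right d]
    ring
  calc ψ y + ((⟪d, y⟫ : ℝ) : EReal) + ((⟪w + d, z - y⟫ : ℝ) : EReal)
      = ψ y + ((⟪w, z - y⟫ : ℝ) : EReal) + ⟪d, z⟫ := by rw [add_assoc, key, ← add_assoc]
    _ ≤ ψ z + ⟪d, z⟫ := by gcongr; exact h z

end Subgradient

section DualFunctions

variable {E F : Type*} [NormedAddCommGroup E] [InnerProductSpace ℝ E] [FiniteDimensional ℝ E]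
  [NormedAddCommGroup F] [InnerProductSpace ℝ F] [FiniteDimensional ℝ F]

theorem HasSubgrad.hasSubgrad_hOne {f : E → EReal} {M : E →ₗ[ℝ] F} {u : E} {y : F} {r : ℝ}
    (hu : f u = r) (h : HasSubgrad f (-(LinearMap.adjoint M y)) u) :
    HasSubgrad (hOne f M) (-(M u)) y := by
  have := (h.hasSubgrad_fconj hu).comp_linearMap (T := -LinearMap.adjoint M)
  rw [map_neg, LinearMap.adjoint_adjoint] at this
  exact this

theorem HasSubgrad.hasSubgrad_hTwo {g : E → EReal} {C : E →ₗ[ℝ] F} {d : F} {v : E} {x : F} {r : ℝ}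
    (hv : g v = r) (h : HasSubgrad g (-(LinearMap.adjoint C x)) v) :
    HasSubgrad (hTwo g C d) (d - C v) x := by
  have := ((h.hasSubgrad_fconj hv).comp_linearMap (T := -LinearMap.adjoint C)).add_inner d
  rw [map_neg, LinearMap.adjoint_adjoint, LinearMap.neg_apply, neg_add_eq_sub] at this
  exact this

theorem HasSubgrad.hOne_eq {f : E → EReal} {M : E →ₗ[ℝ] F} {u : E} {y : F} {r : ℝ}
    (hu : f u = r) (h : HasSubgrad f (-(LinearMap.adjoint M y)) u) :
    hOne f M y = ((⟪-(LinearMap.adjoint M y), u⟫ - r : ℝ) : EReal) :=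
  h.fconj_eq hu

theorem HasSubgrad.hTwo_eq {g : E → EReal} {C : E →ₗ[ℝ] F} {d : F} {v : E} {x : F} {r : ℝ}
    (hv : g v = r) (h : HasSubgrad g (-(LinearMap.adjoint C x)) v) :
    hTwo g C d x = ((⟪-(LinearMap.adjoint C x), v⟫ - r + ⟪d, x⟫ : ℝ) : EReal) := by
  rw [hTwo, h.fconj_eq hv, EReal.coe_add]

end DualFunctions

section Optimality

variable {E F : Type*} [NormedAddCommGroup E] [InnerProductSpace ℝ E] [FiniteDimensional ℝ E]
  [NormedAddCommGroup F] [InnerProductSpace ℝ F] [FiniteDimensional ℝ F]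

theorem ConvexE.hasSubgrad_of_minimizes_add_augmented {φ : E → EReal} (hφ : ConvexE φ) {x : E}
    {r : ℝ} (hx : φ x = r) (L : E →ₗ[ℝ] F) (a e : F) (lam : ℝ)
    (hmin : ∀ y, φ x + ((⟪a, L x - e⟫ + lam / 2 * ‖L x - e‖ ^ 2 : ℝ) : EReal) ≤
      φ y + ((⟪a, L y - e⟫ + lam / 2 * ‖L y - e‖ ^ 2 : ℝ) : EReal)) :
    HasSubgrad φ (-(LinearMap.adjoint L (a + lam • (L x - e)))) x := by
  intro y
  set A := L x - e
  set G := a + lam • A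
  have hinner : ⟪-(LinearMap.adjoint L G), y - x⟫ = -⟪G, (L y - e) - A⟫ := by
    rw [inner_neg_left, LinearMap.adjoint_inner_left, map_sub]
    congr 2
    simp only [A]
    abel
  induction hy : φ y using EReal.rec with
  | bot =>
    have h := hmin y
    rw [hy, hx, EReal.bot_add, ← EReal.coe_add] at h
    exact absurd (le_bot_iff.mp h) (EReal.coe_ne_bot _)
  | top => exact le_top
  | coe s =>
    set D := (L y - e) - A
    rw [hx, hinner, ← EReal.coe_add, EReal.coe_le_coe_iff]
    suffices r - ⟪G, D⟫ - s ≤ 0 by linarith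
    -- Compare `x` with `(1 - t) • x + t • y`: convexity of `φ` and expanding the quadratic
    -- leave an error of order `t`.
    refine nonpos_of_forall_le_mul (K := lam / 2 * ‖D‖ ^ 2) fun t ht₀ ht₁ => ?_
    have hconv := hφ x y (1 - t) t (by linarith) ht₀.le (by ring)
    rw [hx, hy] at hconv
    have hLt : L ((1 - t) • x + t • y) - e = A + t • D := by
      simp only [D, A, map_add, map_smul]
      module
    have hmin_t := (hmin ((1 - t) • x + t • y)).trans (add_le_add_left hconv _)
    rw [hLt, hx] at hmin_t
    norm_cast at hmin_t
    have hexpand : ⟪a, A + t • D⟫ + lam / 2 * ‖A + t • D‖ ^ 2 =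
        ⟪a, A⟫ + lam / 2 * ‖A‖ ^ 2 + t * ⟪G, D⟫ + t ^ 2 * (lam / 2 * ‖D‖ ^ 2) := by
      simp only [G, inner_add_right, inner_add_left, real_inner_smul_left, real_inner_smul_right,
        norm_add_sq_real, norm_smul, Real.norm_eq_abs, mul_pow, sq_abs]
      ring
    rw [hexpand] at hmin_t
    nlinarith

theorem IsPCC.hasSubgrad_of_minimizes_add_augmented {φ : E → EReal} (hφ : IsPCC φ) {x : E}
    (L : E →ₗ[ℝ] F) (a e : F) (lam : ℝ)
    (hmin : ∀ y, φ x + ((⟪a, L x - e⟫ + lam / 2 * ‖L x - e‖ ^ 2 : ℝ) : EReal) ≤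
      φ y + ((⟪a, L y - e⟫ + lam / 2 * ‖L y - e‖ ^ 2 : ℝ) : EReal)) :
    (∃ r : ℝ, φ x = r) ∧ HasSubgrad φ (-(LinearMap.adjoint L (a + lam • (L x - e)))) x := by
  obtain ⟨y, hy⟩ := hφ.2.1
  have hx : φ x ≠ ⊤ := fun hx => by
    have h := hmin y
    rw [hx, EReal.top_add_coe, top_le_iff] at h
    exact (EReal.add_ne_top_iff_ne_top_left (EReal.coe_ne_bot _) (EReal.coe_ne_top _)).mpr hy h
  obtain ⟨r, hr⟩ := EReal.exists_eq_coe hx (hφ.1 x)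
  exact ⟨⟨r, hr⟩, hφ.2.2.2.hasSubgrad_of_minimizes_add_augmented hr L a e lam hmin⟩

end Optimality

section Saddle

variable {E₁ E₂ F : Type*} [NormedAddCommGroup E₁] [InnerProductSpace ℝ E₁]
  [NormedAddCommGroup E₂] [InnerProductSpace ℝ E₂] [NormedAddCommGroup F] [InnerProductSpace ℝ F]
  {f : E₁ → EReal} {g : E₂ → EReal} {M : E₁ →ₗ[ℝ] F} {C : E₂ →ₗ[ℝ] F} {d : F}
  {us : E₁} {vs : E₂} {zs : F}

theorem IsSaddle.exists_eq_coe (hsad : IsSaddle f g M C d us vs zs) (hf : ∀ u, f u ≠ ⊥)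
    (hg : ∀ v, g v ≠ ⊥) : (∃ r : ℝ, f us = r) ∧ ∃ r : ℝ, g vs = r := by
  have hsum := (EReal.add_ne_top_iff_ne_top_left (EReal.coe_ne_bot _) (EReal.coe_ne_top _)).mp
    hsad.1
  obtain ⟨hfus, hgvs⟩ := (EReal.add_ne_top_iff_ne_top₂ (hf us) (hg vs)).mp hsum
  exact ⟨EReal.exists_eq_coe hfus (hf us), EReal.exists_eq_coe hgvs (hg vs)⟩

theorem IsSaddle.feasible {rf rg : ℝ} (hsad : IsSaddle f g M C d us vs zs) (hrf : f us = rf)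
    (hrg : g vs = rg) : M us + C vs = d := by
  set e := M us + C vs - d
  have h := hsad.2.2.2 (zs + e)
  simp only [Lag, hrf, hrg] at h
  norm_cast at h
  rw [inner_add_right, real_inner_self_eq_norm_sq] at h
  have : ‖e‖ = 0 := by nlinarith [norm_nonneg e]
  rwa [norm_eq_zero, sub_eq_zero] at this

theorem IsSaddle.hasSubgrad_fst [FiniteDimensional ℝ E₁] [FiniteDimensional ℝ F] {rg : ℝ}
    (hsad : IsSaddle f g M C d us vs zs) (hrg : g vs = rg) :
    HasSubgrad f (-(LinearMap.adjoint M zs)) us := by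
  intro u
  have h := hsad.2.2.1 u vs
  simp only [Lag, hrg, add_assoc, ← EReal.coe_add] at h
  convert EReal.add_coe_sub_le h using 3
  rw [inner_neg_left, LinearMap.adjoint_inner_left, map_sub, inner_sub_right]
  simp only [real_inner_comm zs, inner_add_right, inner_sub_right]
  ring

theorem IsSaddle.hasSubgrad_snd [FiniteDimensional ℝ E₂] [FiniteDimensional ℝ F] {rf : ℝ}
    (hsad : IsSaddle f g M C d us vs zs) (hrf : f us = rf) :
    HasSubgrad g (-(LinearMap.adjoint C zs)) vs := by
  intro v
  have h := hsad.2.2.1 us v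
  simp only [Lag, hrf, add_comm (rf : EReal), add_assoc, ← EReal.coe_add] at h
  convert EReal.add_coe_sub_le h using 3
  rw [inner_neg_left, LinearMap.adjoint_inner_left, map_sub, inner_sub_right]
  simp only [real_inner_comm zs, inner_add_right, inner_sub_right]
  ring

theorem IsSaddle.mem_extSolSet [FiniteDimensional ℝ E₁] [FiniteDimensional ℝ E₂]
    [FiniteDimensional ℝ F] (hsad : IsSaddle f g M C d us vs zs) (hf : ∀ u, f u ≠ ⊥)
    (hg : ∀ v, g v ≠ ⊥) : (zs, M us) ∈ extSolSet f g M C d := by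
  obtain ⟨⟨rf, hrf⟩, ⟨rg, hrg⟩⟩ := hsad.exists_eq_coe hf hg
  have hMus : d - C vs = M us := by rw [← hsad.feasible hrf hrg, add_sub_cancel_right]
  exact ⟨(hsad.hasSubgrad_fst hrg).hasSubgrad_hOne hrf,
    hMus ▸ (hsad.hasSubgrad_snd hrf).hasSubgrad_hTwo hrg⟩

end Saddle

section Projection

variable {F : Type*} [NormedAddCommGroup F] [InnerProductSpace ℝ F]

theorem norm_sq_add_smul_add_norm_sq_add_smul_le {z w a b p₁ p₂ : F} {t N : ℝ} (ht : 0 ≤ t)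
    (hsep : N ≤ ⟪a, p₁ - z⟫ + ⟪b, p₂ - w⟫) :
    ‖z + t • a - p₁‖ ^ 2 + ‖w + t • b - p₂‖ ^ 2 ≤
      ‖z - p₁‖ ^ 2 + ‖w - p₂‖ ^ 2 - 2 * t * N + t ^ 2 * (‖a‖ ^ 2 + ‖b‖ ^ 2) := by
  have expand : ∀ q c p : F,
      ‖q + t • c - p‖ ^ 2 = ‖q - p‖ ^ 2 - 2 * t * ⟪c, p - q⟫ + t ^ 2 * ‖c‖ ^ 2 := by
    intro q c p
    rw [show q + t • c - p = (q - p) + t • c by abel, norm_add_sq_real, real_inner_smul_right,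
      norm_smul, mul_pow, Real.norm_eq_abs, sq_abs, real_inner_comm, ← neg_sub p q, inner_neg_right,
      neg_sub]
    ring
  rw [expand, expand]
  nlinarith

theorem relaxed_step_decrease {S N τ ρ ρb : ℝ} (hS : 0 ≤ S) (hN : τ / 2 * S ≤ N) (hτ : 0 ≤ τ)
    (hρb : ρb ∈ Set.Ico 0 1) (hρ : ρ ∈ Set.Icc (1 - ρb) (1 + ρb)) :
    -2 * (ρ * (N / S)) * N + (ρ * (N / S)) ^ 2 * S ≤ -((1 - ρb) ^ 2 * (τ / 2) ^ 2 * S) := by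
  -- For `S = 0` the junk value `N / 0 = 0` makes both sides vanish.
  rcases hS.eq_or_lt with rfl | hS
  · simp
  obtain ⟨hρb₀, hρb₁⟩ := hρb
  obtain ⟨hρ₁, hρ₂⟩ := hρ
  have hρ2ρ : (1 - ρb) ^ 2 ≤ ρ * (2 - ρ) := by nlinarith
  have hN2 : (τ / 2 * S) ^ 2 ≤ N ^ 2 := pow_le_pow_left₀ (by positivity) hN 2
  have hlhs : -2 * (ρ * (N / S)) * N + (ρ * (N / S)) ^ 2 * S = -(ρ * (2 - ρ) * N ^ 2 / S) := by
    field_simp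
    ring
  rw [hlhs, neg_le_neg_iff, le_div_iff₀ hS]
  calc (1 - ρb) ^ 2 * (τ / 2) ^ 2 * S * S = (1 - ρb) ^ 2 * (τ / 2 * S) ^ 2 := by ring
    _ ≤ ρ * (2 - ρ) * N ^ 2 := by gcongr; linarith [sq_nonneg (1 - ρb)]

end Projection

section PMMStep

variable {F : Type*} [NormedAddCommGroup F] [InnerProductSpace ℝ F]

theorem pmm_separation {z w m c d p₁ p₂ : F} {lam : ℝ}
    (hm₁ : 0 ≤ ⟪(d - c) - p₂, z + lam • w + lam • (c - d) - p₁⟫)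
    (hm₂ : 0 ≤ ⟪-m - -p₂, z + lam • w + lam • (c - d) - lam • (w - m) - p₁⟫) :
    lam * (‖m + c - d‖ ^ 2 + ‖w - m‖ ^ 2 + ⟪m + c - d, w - m⟫) ≤
      ⟪m + c - d, p₁ - z⟫ + ⟪-lam • (w - m), p₂ - w⟫ := by
  simp only [inner_sub_left, inner_sub_right, inner_add_left, inner_add_right, inner_neg_left,
    real_inner_smul_right, neg_smul, ← real_inner_self_eq_norm_sq,
    real_inner_comm] at hm₁ hm₂ ⊢
  linarith

theorem pmm_separation_value_ge {a b : F} {lam τ : ℝ} (hlam : 0 ≤ lam) (hτlam : τ ≤ lam)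
    (hτlam' : τ * lam ≤ 1) :
    τ / 2 * (‖a‖ ^ 2 + lam ^ 2 * ‖b‖ ^ 2) ≤ lam * (‖a‖ ^ 2 + ‖b‖ ^ 2 + ⟪a, b⟫) := by
  have hab : -(‖a‖ ^ 2 + ‖b‖ ^ 2) / 2 ≤ ⟪a, b⟫ := by
    nlinarith [norm_add_sq_real a b, sq_nonneg ‖a + b‖]
  nlinarith [mul_nonneg (sub_nonneg.2 hτlam) (sq_nonneg ‖a‖),
    mul_nonneg (mul_nonneg hlam (sub_nonneg.2 hτlam')) (sq_nonneg ‖b‖)]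

theorem pmm_fejer_step {z w m c d p₁ p₂ : F} {lam τ ρb ρ γ : ℝ} (hlam : 0 ≤ lam) (hτ : 0 ≤ τ)
    (hτlam : τ ≤ lam) (hτlam' : τ * lam ≤ 1) (hρb : ρb ∈ Set.Ico 0 1)
    (hρ : ρ ∈ Set.Icc (1 - ρb) (1 + ρb))
    (hγ : γ = (lam * ‖c - d + w‖ ^ 2 + lam * ⟪d - c - m, w - m⟫) /
      (‖m + c - d‖ ^ 2 + lam ^ 2 * ‖m - w‖ ^ 2))
    (hm₁ : 0 ≤ ⟪(d - c) - p₂, z + lam • w + lam • (c - d) - p₁⟫)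
    (hm₂ : 0 ≤ ⟪-m - -p₂, z + lam • w + lam • (c - d) - lam • (w - m) - p₁⟫) :
    ‖z + (ρ * γ) • (m + c - d) - p₁‖ ^ 2 + ‖w - (ρ * γ * lam) • (w - m) - p₂‖ ^ 2 +
        (1 - ρb) ^ 2 * (τ / 2) ^ 2 * (‖m + c - d‖ ^ 2 + lam ^ 2 * ‖m - w‖ ^ 2) ≤
      ‖z - p₁‖ ^ 2 + ‖w - p₂‖ ^ 2 := by
  have hnorm : ‖m - w‖ = ‖w - m‖ := norm_sub_rev m w
  have hγN : γ = lam * (‖m + c - d‖ ^ 2 + ‖w - m‖ ^ 2 + ⟪m + c - d, w - m⟫) /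
      (‖m + c - d‖ ^ 2 + lam ^ 2 * ‖w - m‖ ^ 2) := by
    rw [hγ, hnorm, show c - d + w = (m + c - d) + (w - m) by abel,
      show d - c - m = -(m + c - d) by abel, norm_add_sq_real, inner_neg_left]
    ring
  have hN := pmm_separation_value_ge (a := m + c - d) (b := w - m) hlam hτlam hτlam'
  have ht : 0 ≤ ρ * γ := by
    rw [hγN]
    exact mul_nonneg (by linarith [hρ.1, hρb.2])
      (div_nonneg (le_trans (by positivity) hN) (by positivity))
  have hstep := norm_sq_add_smul_add_norm_sq_add_smul_le ht (pmm_separation hm₁ hm₂)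
  rw [show w + (ρ * γ) • -lam • (w - m) = w - (ρ * γ * lam) • (w - m) by module, norm_smul,
    Real.norm_eq_abs, abs_neg, abs_of_nonneg hlam, mul_pow] at hstep
  have hdec := relaxed_step_decrease (by positivity) hN hτ hρb hρ
  rw [← hγN] at hdec
  rw [hnorm]
  linarith

end PMMStep

section PMM

variable {E₁ E₂ F : Type*} [NormedAddCommGroup E₁] [InnerProductSpace ℝ E₁]
  [NormedAddCommGroup E₂] [InnerProductSpace ℝ E₂] [NormedAddCommGroup F] [InnerProductSpace ℝ F]
  {f : E₁ → EReal} {g : E₂ → EReal} {M : E₁ →ₗ[ℝ] F} {C : E₂ →ₗ[ℝ] F} {d : F} {lam ρb : ℝ}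
  {u : ℕ → E₁} {v : ℕ → E₂} {z w x y : ℕ → F} {γ ρ : ℕ → ℝ}

structure IsPMM (f : E₁ → EReal) (g : E₂ → EReal) (M : E₁ →ₗ[ℝ] F) (C : E₂ →ₗ[ℝ] F) (d : F)
    (lam ρb : ℝ) (u : ℕ → E₁) (v : ℕ → E₂) (z w x y : ℕ → F) (γ ρ : ℕ → ℝ) : Prop where
  min_v : ∀ k, 1 ≤ k → ∀ v' : E₂,
    g (v k) + ((⟪z (k-1) + lam • w (k-1), C (v k) - d⟫ +
        lam / 2 * ‖C (v k) - d‖ ^ 2 : ℝ) : EReal) ≤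
      g v' + ((⟪z (k-1) + lam • w (k-1), C v' - d⟫ +
        lam / 2 * ‖C v' - d‖ ^ 2 : ℝ) : EReal)
  min_u : ∀ k, 1 ≤ k → ∀ u' : E₁,
    f (u k) + ((⟪z (k-1) + lam • (C (v k) - d), M (u k)⟫ +
        lam / 2 * ‖M (u k)‖ ^ 2 : ℝ) : EReal) ≤
      f u' + ((⟪z (k-1) + lam • (C (v k) - d), M u'⟫ +
        lam / 2 * ‖M u'‖ ^ 2 : ℝ) : EReal)
  x_eq : ∀ k, 1 ≤ k → x k = z (k-1) + lam • w (k-1) + lam • (C (v k) - d)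
  y_eq : ∀ k, 1 ≤ k → y k = x k - lam • (w (k-1) - M (u k))
  γ_eq : ∀ k, 1 ≤ k → γ k = (lam * ‖C (v k) - d + w (k-1)‖ ^ 2 +
      lam * ⟪d - C (v k) - M (u k), w (k-1) - M (u k)⟫) /
    (‖M (u k) + C (v k) - d‖ ^ 2 + lam ^ 2 * ‖M (u k) - w (k-1)‖ ^ 2)
  ρ_mem : ∀ k, 1 ≤ k → ρ k ∈ Set.Icc (1 - ρb) (1 + ρb)
  z_eq : ∀ k, 1 ≤ k → z k = z (k-1) + (ρ k * γ k) • (M (u k) + C (v k) - d)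
  w_eq : ∀ k, 1 ≤ k → w k = w (k-1) - (ρ k * γ k * lam) • (w (k-1) - M (u k))

theorem IsPMM.hasSubgrad_g [FiniteDimensional ℝ E₂] [FiniteDimensional ℝ F]
    (hpmm : IsPMM f g M C d lam ρb u v z w x y γ ρ) (hg : IsPCC g)
    {j : ℕ} (hj : 1 ≤ j) :
    (∃ r : ℝ, g (v j) = r) ∧ HasSubgrad g (-(LinearMap.adjoint C (x j))) (v j) := by
  rw [hpmm.x_eq j hj]
  exact hg.hasSubgrad_of_minimizes_add_augmented C _ d lam (hpmm.min_v j hj)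

theorem IsPMM.hasSubgrad_f [FiniteDimensional ℝ E₁] [FiniteDimensional ℝ F]
    (hpmm : IsPMM f g M C d lam ρb u v z w x y γ ρ) (hf : IsPCC f)
    {j : ℕ} (hj : 1 ≤ j) :
    (∃ r : ℝ, f (u j) = r) ∧ HasSubgrad f (-(LinearMap.adjoint M (y j))) (u j) := by
  have hmin : ∀ u', f (u j) + ((⟪z (j-1) + lam • (C (v j) - d), M (u j) - 0⟫ +
        lam / 2 * ‖M (u j) - 0‖ ^ 2 : ℝ) : EReal) ≤
      f u' + ((⟪z (j-1) + lam • (C (v j) - d), M u' - 0⟫ +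
        lam / 2 * ‖M u' - 0‖ ^ 2 : ℝ) : EReal) := by
    simpa only [sub_zero] using hpmm.min_u j hj
  have hy : y j = z (j-1) + lam • (C (v j) - d) + lam • (M (u j) - 0) := by
    rw [hpmm.y_eq j hj, hpmm.x_eq j hj]
    module
  rw [hy]
  exact hf.hasSubgrad_of_minimizes_add_augmented M _ 0 lam hmin

theorem IsPMM.fejer [FiniteDimensional ℝ E₁] [FiniteDimensional ℝ E₂] [FiniteDimensional ℝ F]
    (hpmm : IsPMM f g M C d lam ρb u v z w x y γ ρ) (hf : IsPCC f) (hg : IsPCC g)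
    (hlam : 0 < lam) (hρb : ρb ∈ Set.Ico 0 1) {τ : ℝ} (hτ : τ = min lam (1 / lam))
    {p : F × F} (hp : p ∈ extSolSet f g M C d) {j : ℕ} (hj : 1 ≤ j) :
    ‖z j - p.1‖ ^ 2 + ‖w j - p.2‖ ^ 2 + (1 - ρb) ^ 2 * (τ / 2) ^ 2 *
        (‖M (u j) + C (v j) - d‖ ^ 2 + lam ^ 2 * ‖M (u j) - w (j - 1)‖ ^ 2) ≤
      ‖z (j - 1) - p.1‖ ^ 2 + ‖w (j - 1) - p.2‖ ^ 2 := by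
  obtain ⟨⟨rg, hrg⟩, hgsub⟩ := hpmm.hasSubgrad_g hg hj
  obtain ⟨⟨rf, hrf⟩, hfsub⟩ := hpmm.hasSubgrad_f hf hj
  have hm₁ := (hgsub.hasSubgrad_hTwo hrg).inner_sub_nonneg (hgsub.hTwo_eq hrg) hp.2
  have hm₂ := (hfsub.hasSubgrad_hOne hrf).inner_sub_nonneg (hfsub.hOne_eq hrf) hp.1
  rw [hpmm.x_eq j hj] at hm₁
  rw [hpmm.y_eq j hj, hpmm.x_eq j hj] at hm₂
  have hτlam' : τ * lam ≤ 1 := hτ ▸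
    (mul_le_mul_of_nonneg_right (min_le_right _ _) hlam.le).trans_eq (one_div_mul_cancel hlam.ne')
  rw [hpmm.z_eq j hj, hpmm.w_eq j hj]
  exact pmm_fejer_step hlam.le (hτ ▸ le_min hlam.le (by positivity)) (hτ ▸ min_le_left _ _)
    hτlam' hρb (hpmm.ρ_mem j hj) (hpmm.γ_eq j hj) hm₁ hm₂

theorem IsPMM.exists_residual_le [FiniteDimensional ℝ E₁] [FiniteDimensional ℝ E₂]
    [FiniteDimensional ℝ F] (hpmm : IsPMM f g M C d lam ρb u v z w x y γ ρ) (hf : IsPCC f)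
    (hg : IsPCC g) (hlam : 0 < lam) (hρb : ρb ∈ Set.Ico 0 1) {τ : ℝ}
    (hτ : τ = min lam (1 / lam)) {k : ℕ} (hk : 1 ≤ k) :
    ∃ i, 1 ≤ i ∧ i ≤ k ∧ ∀ p ∈ extSolSet f g M C d,
      k * ((1 - ρb) ^ 2 * (τ / 2) ^ 2 *
        (‖M (u i) + C (v i) - d‖ ^ 2 + lam ^ 2 * ‖M (u i) - w (i - 1)‖ ^ 2)) ≤
      ‖z 0 - p.1‖ ^ 2 + ‖w 0 - p.2‖ ^ 2 :=
  exists_forall_mul_le_of_forall_add_le (e := fun p j => ‖z j - p.1‖ ^ 2 + ‖w j - p.2‖ ^ 2)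
    (fun _ _ _ => by positivity) (fun _ hp _ hj => hpmm.fejer hf hg hlam hρb hτ hp hj) hk

end PMM

theorem pmm_pointwise_complexity_general
    (m1 m2 n : ℕ)
    (f : EuclideanSpace ℝ (Fin m1) → EReal) (g : EuclideanSpace ℝ (Fin m2) → EReal)
    (hf : IsPCC f) (hg : IsPCC g)
    (M : EuclideanSpace ℝ (Fin m1) →ₗ[ℝ] EuclideanSpace ℝ (Fin n))
    (C : EuclideanSpace ℝ (Fin m2) →ₗ[ℝ] EuclideanSpace ℝ (Fin n))
    (d : EuclideanSpace ℝ (Fin n))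
    (lam : ℝ) (hlam : 0 < lam) (ρb : ℝ) (hρb : ρb ∈ Set.Ico (0 : ℝ) 1)
    (u : ℕ → EuclideanSpace ℝ (Fin m1)) (v : ℕ → EuclideanSpace ℝ (Fin m2))
    (z w x y : ℕ → EuclideanSpace ℝ (Fin n)) (γ ρ : ℕ → ℝ)
    (hv : ∀ k, 1 ≤ k → ∀ v' : EuclideanSpace ℝ (Fin m2),
      g (v k) + ((⟪z (k-1) + lam • w (k-1), C (v k) - d⟫ +
          lam / 2 * ‖C (v k) - d‖ ^ 2 : ℝ) : EReal) ≤
        g v' + ((⟪z (k-1) + lam • w (k-1), C v' - d⟫ +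
          lam / 2 * ‖C v' - d‖ ^ 2 : ℝ) : EReal))
    (hu : ∀ k, 1 ≤ k → ∀ u' : EuclideanSpace ℝ (Fin m1),
      f (u k) + ((⟪z (k-1) + lam • (C (v k) - d), M (u k)⟫ +
          lam / 2 * ‖M (u k)‖ ^ 2 : ℝ) : EReal) ≤
        f u' + ((⟪z (k-1) + lam • (C (v k) - d), M u'⟫ +
          lam / 2 * ‖M u'‖ ^ 2 : ℝ) : EReal))
    (hx : ∀ k, 1 ≤ k → x k = z (k-1) + lam • w (k-1) + lam • (C (v k) - d))
    (hy : ∀ k, 1 ≤ k → y k = x k - lam • (w (k-1) - M (u k)))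
    (hγ : ∀ k, 1 ≤ k → γ k = (lam * ‖C (v k) - d + w (k-1)‖ ^ 2 +
        lam * ⟪d - C (v k) - M (u k), w (k-1) - M (u k)⟫) /
      (‖M (u k) + C (v k) - d‖ ^ 2 + lam ^ 2 * ‖M (u k) - w (k-1)‖ ^ 2))
    (hρ : ∀ k, 1 ≤ k → ρ k ∈ Set.Icc (1 - ρb) (1 + ρb))
    (hz : ∀ k, 1 ≤ k → z k = z (k-1) + (ρ k * γ k) • (M (u k) + C (v k) - d))
    (hw : ∀ k, 1 ≤ k → w k = w (k-1) - (ρ k * γ k * lam) • (w (k-1) - M (u k)))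
    (hsaddle : ∃ us vs zs, IsSaddle f g M C d us vs zs)
    (d0 : ℝ)
    (hd0 : d0 = sInf ((fun p : EuclideanSpace ℝ (Fin n) × EuclideanSpace ℝ (Fin n) =>
      Real.sqrt (‖z 0 - p.1‖ ^ 2 + ‖w 0 - p.2‖ ^ 2)) '' extSolSet f g M C d))
    (τ : ℝ) (hτ : τ = min lam (1 / lam))
    (k : ℕ) (hk : 1 ≤ k) :
    (∀ j, 1 ≤ j → j ≤ k →
      HasSubgrad g (-(LinearMap.adjoint C (x j))) (v j) ∧
      HasSubgrad f (-(LinearMap.adjoint M (y j))) (u j)) ∧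
    ∃ i, 1 ≤ i ∧ i ≤ k ∧
      ‖M (u i) + C (v i) - d‖ ≤ 2 * d0 / ((1 - ρb) * τ * Real.sqrt k) ∧
      ‖x i - y i‖ ≤ 2 * d0 / ((1 - ρb) * τ * Real.sqrt k) := by
  have hpmm : IsPMM f g M C d lam ρb u v z w x y γ ρ := ⟨hv, hu, hx, hy, hγ, hρ, hz, hw⟩
  obtain ⟨us, vs, zs, hsad⟩ := hsaddle
  obtain ⟨i, hi₁, hik, hi⟩ := hpmm.exists_residual_le hf hg hlam hρb hτ hk
  have hK : 0 < (1 - ρb) * τ * √k / 2 := by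
    have : 0 < τ := hτ ▸ lt_min hlam (by positivity)
    have : (0 : ℝ) < √k := Real.sqrt_pos.2 (by exact_mod_cast hk)
    have : 0 < 1 - ρb := sub_pos.2 hρb.2
    positivity
  have hbound : ∀ q,
      q ^ 2 ≤ ‖M (u i) + C (v i) - d‖ ^ 2 + lam ^ 2 * ‖M (u i) - w (i - 1)‖ ^ 2 →
      q ≤ 2 * d0 / ((1 - ρb) * τ * √k) := by
    intro q hqS
    rw [mul_comm, ← div_div_eq_mul_div, hd0]
    refine le_div_sInf_image_sqrt ⟨_, hsad.mem_extSolSet hf.1 hg.1⟩ hK fun p hp =>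
      le_trans ?_ (hi p hp)
    calc ((1 - ρb) * τ * √k / 2 * q) ^ 2 = k * ((1 - ρb) ^ 2 * (τ / 2) ^ 2 * q ^ 2) := by
          rw [mul_pow, div_pow, mul_pow, mul_pow, Real.sq_sqrt k.cast_nonneg]; ring
      _ ≤ _ := by gcongr
  refine ⟨fun j hj _ => ⟨(hpmm.hasSubgrad_g hg hj).2, (hpmm.hasSubgrad_f hf hj).2⟩, i, hi₁, hik,
    hbound _ (le_add_of_nonneg_right (by positivity)), hbound _ ?_⟩
  rw [hy i hi₁, sub_sub_cancel, norm_smul, Real.norm_eq_abs, abs_of_pos hlam, norm_sub_rev, mul_pow]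
  exact le_add_of_nonneg_left (by positivity)

/-- pointwise complexity of the PMM. -/
theorem pmm_pointwise_complexity
    (m1 m2 n : ℕ)
    (f : EuclideanSpace ℝ (Fin m1) → EReal) (g : EuclideanSpace ℝ (Fin m2) → EReal)
    (hf : IsPCC f) (hg : IsPCC g)
    (M : EuclideanSpace ℝ (Fin m1) →ₗ[ℝ] EuclideanSpace ℝ (Fin n))
    (C : EuclideanSpace ℝ (Fin m2) →ₗ[ℝ] EuclideanSpace ℝ (Fin n))
    (d : EuclideanSpace ℝ (Fin n))
    (lam : ℝ) (hlam : 0 < lam) (ρb : ℝ) (hρb : ρb ∈ Set.Ico (0 : ℝ) 1)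
    (u : ℕ → EuclideanSpace ℝ (Fin m1)) (v : ℕ → EuclideanSpace ℝ (Fin m2))
    (z w x y : ℕ → EuclideanSpace ℝ (Fin n)) (γ ρ : ℕ → ℝ)
    (hv : ∀ k, 1 ≤ k → ∀ v' : EuclideanSpace ℝ (Fin m2),
      g (v k) + ((⟪z (k-1) + lam • w (k-1), C (v k) - d⟫ +
          lam / 2 * ‖C (v k) - d‖ ^ 2 : ℝ) : EReal) ≤
        g v' + ((⟪z (k-1) + lam • w (k-1), C v' - d⟫ +
          lam / 2 * ‖C v' - d‖ ^ 2 : ℝ) : EReal))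
    (hu : ∀ k, 1 ≤ k → ∀ u' : EuclideanSpace ℝ (Fin m1),
      f (u k) + ((⟪z (k-1) + lam • (C (v k) - d), M (u k)⟫ +
          lam / 2 * ‖M (u k)‖ ^ 2 : ℝ) : EReal) ≤
        f u' + ((⟪z (k-1) + lam • (C (v k) - d), M u'⟫ +
          lam / 2 * ‖M u'‖ ^ 2 : ℝ) : EReal))
    (hx : ∀ k, 1 ≤ k → x k = z (k-1) + lam • w (k-1) + lam • (C (v k) - d))
    (hy : ∀ k, 1 ≤ k → y k = x k - lam • (w (k-1) - M (u k)))
    (hnz : ∀ k, 1 ≤ k → ‖M (u k) + C (v k) - d‖ + ‖M (u k) - w (k-1)‖ ≠ 0)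
    (hγ : ∀ k, 1 ≤ k → γ k = (lam * ‖C (v k) - d + w (k-1)‖ ^ 2 +
        lam * ⟪d - C (v k) - M (u k), w (k-1) - M (u k)⟫) /
      (‖M (u k) + C (v k) - d‖ ^ 2 + lam ^ 2 * ‖M (u k) - w (k-1)‖ ^ 2))
    (hρ : ∀ k, 1 ≤ k → ρ k ∈ Set.Icc (1 - ρb) (1 + ρb))
    (hz : ∀ k, 1 ≤ k → z k = z (k-1) + (ρ k * γ k) • (M (u k) + C (v k) - d))
    (hw : ∀ k, 1 ≤ k → w k = w (k-1) - (ρ k * γ k * lam) • (w (k-1) - M (u k)))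
    (hsaddle : ∃ us vs zs, IsSaddle f g M C d us vs zs)
    (hA2 : (intrinsicInterior ℝ {ξ : EuclideanSpace ℝ (Fin m1) | fconj f ξ < ⊤} ∩
      Set.range (LinearMap.adjoint M)).Nonempty)
    (hA3 : (intrinsicInterior ℝ {ξ : EuclideanSpace ℝ (Fin m2) | fconj g ξ < ⊤} ∩
      Set.range (LinearMap.adjoint C)).Nonempty)
    (d0 : ℝ)
    (hd0 : d0 = sInf ((fun p : EuclideanSpace ℝ (Fin n) × EuclideanSpace ℝ (Fin n) =>
      Real.sqrt (‖z 0 - p.1‖ ^ 2 + ‖w 0 - p.2‖ ^ 2)) '' extSolSet f g M C d))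
    (τ : ℝ) (hτ : τ = min lam (1 / lam))
    (k : ℕ) (hk : 1 ≤ k) :
    (∀ j, 1 ≤ j → j ≤ k →
      HasSubgrad g (-(LinearMap.adjoint C (x j))) (v j) ∧
      HasSubgrad f (-(LinearMap.adjoint M (y j))) (u j)) ∧
    ∃ i, 1 ≤ i ∧ i ≤ k ∧
      ‖M (u i) + C (v i) - d‖ ≤ 2 * d0 / ((1 - ρb) * τ * Real.sqrt k) ∧
      ‖x i - y i‖ ≤ 2 * d0 / ((1 - ρb) * τ * Real.sqrt k) :=
  pmm_pointwise_complexity_general m1 m2 n f g hf hg M C d lam hlam ρb hρb u v z w x y γ ρ hv hu hx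
    hy hγ hρ hz hw hsaddle d0 hd0 τ hτ k hk
end
end

section
/- For every k ≥ 1 the ergodic quantities of the PMM satisfy ε̄_k^u ≥ 0, ε̄_k^v ≥ 0, and the ε-subdifferential inclusions 0 ∈ ∂_{ε̄_k^v} g(v̄_k) + C*x̄_k and 0 ∈ ∂_{ε̄_k^u} f(ū_k) + M*ȳ_k. -/
/-!
The minimization steps of the PMM are first-order optimality conditions in disguise: the
gradient of the augmented term at `v_k` is `C* x_k`, and at `u_k` it is `M* y_k`, so
`-C* x_k ∈ ∂g(v_k)` and `-M* y_k ∈ ∂f(u_k)`. The stepsizes `γ_k` are nonnegative, so the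
ergodic points are convex combinations of the iterates, and averaging the exact subgradient
inequalities gives the `ε`-subgradient inequalities at the averages, with exactly the errors
`ε̄_k`. These errors are nonnegative by Jensen's inequality.
-/

open scoped RealInnerProductSpace

noncomputable section

open Finset Filter Topology

theorem le_of_forall_mem_Ioc_le_add_mul {a b c : ℝ} (h : ∀ t ∈ Set.Ioc (0 : ℝ) 1, a ≤ b + t * c) :
    a ≤ b := by
  have hlim : Tendsto (fun t : ℝ => b + t * c) (𝓝[>] 0) (𝓝 b) := by
    have : Tendsto (fun t : ℝ => b + t * c) (𝓝 0) (𝓝 (b + 0 * c)) :=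
      (continuous_const.add (continuous_id.mul continuous_const)).tendsto 0
    simpa using this.mono_left nhdsWithin_le_nhds
  exact ge_of_tendsto hlim (eventually_of_mem (Ioc_mem_nhdsGT one_pos) h)

section SubgradientCalculus

variable {E : Type*} [NormedAddCommGroup E] [InnerProductSpace ℝ E] {φ : E → EReal}

theorem ConvexE.convexOn_toReal (hconv : ConvexE φ) (hbot : ∀ x, φ x ≠ ⊥) :
    ConvexOn ℝ {x | φ x ≠ ⊤} (fun x => (φ x).toReal) := by
  have key : ∀ ⦃x y : E⦄, φ x ≠ ⊤ → φ y ≠ ⊤ → ∀ ⦃a b : ℝ⦄, 0 ≤ a → 0 ≤ b → a + b = 1 →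
      φ (a • x + b • y) ≤ ((a * (φ x).toReal + b * (φ y).toReal : ℝ) : EReal) := by
    intro x y hx hy a b ha hb hab
    have := hconv x y a b ha hb hab
    rwa [← EReal.coe_toReal hx (hbot x), ← EReal.coe_toReal hy (hbot y)] at this
  refine ⟨fun x hx y hy a b ha hb hab => ?_, fun x hx y hy a b ha hb hab => ?_⟩
  · exact ne_top_of_le_ne_top (EReal.coe_ne_top _) (key hx hy ha hb hab)
  · have := EReal.toReal_le_toReal (key hx hy ha hb hab) (hbot _) (EReal.coe_ne_top _)
    rwa [EReal.toReal_coe] at this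

theorem HasSubgrad.ne_top {σ p x : E} (h : HasSubgrad φ σ p) (hx : φ x ≠ ⊤) : φ p ≠ ⊤ := by
  intro htop
  have := h x
  rw [htop, EReal.top_add_coe, top_le_iff] at this
  exact hx this

theorem HasSubgrad.toReal_add_inner_le (hbot : ∀ x, φ x ≠ ⊥) {σ p x : E}
    (h : HasSubgrad φ σ p) (hp : φ p ≠ ⊤) (hx : φ x ≠ ⊤) :
    (φ p).toReal + ⟪σ, x - p⟫ ≤ (φ x).toReal := by
  have := h x
  rw [← EReal.coe_toReal hp (hbot p), ← EReal.coe_toReal hx (hbot x)] at this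
  exact_mod_cast this

/-- `hQ` says that `s` is the gradient of `Q` at `v`; the curvature `c` may have any sign,
since only `t → 0⁺` matters. -/
theorem hasSubgrad_neg_of_minimizes_add (hconv : ConvexE φ) (hbot : ∀ x, φ x ≠ ⊥)
    {Q c : E → ℝ} {s v : E} (hQ : ∀ (h : E) (t : ℝ), Q (v + t • h) = Q v + t * ⟪s, h⟫ + t ^ 2 * c h)
    (hv : φ v ≠ ⊤) (hmin : ∀ v', φ v + (Q v : EReal) ≤ φ v' + (Q v' : EReal)) :
    HasSubgrad φ (-s) v := by
  have hD := hconv.convexOn_toReal hbot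
  intro x
  rcases eq_or_ne (φ x) ⊤ with hx | hx
  · simp [hx]
  suffices (φ v).toReal + ⟪-s, x - v⟫ ≤ (φ x).toReal by
    rw [← EReal.coe_toReal hv (hbot v), ← EReal.coe_toReal hx (hbot x)]
    exact_mod_cast this
  have key : ∀ t ∈ Set.Ioc (0 : ℝ) 1,
      (φ v).toReal ≤ ((φ x).toReal + ⟪s, x - v⟫) + t * c (x - v) := by
    rintro t ⟨ht0, ht1⟩
    have hseg : v + t • (x - v) = (1 - t) • v + t • x := by module
    have hmem := hD.1 hv hx (by linarith : (0 : ℝ) ≤ 1 - t) ht0.le (by ring)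
    have hseg_le := hD.2 hv hx (by linarith : (0 : ℝ) ≤ 1 - t) ht0.le (by ring)
    rw [← hseg] at hmem hseg_le
    have hmint := hmin (v + t • (x - v))
    rw [← EReal.coe_toReal hv (hbot v), ← EReal.coe_toReal hmem (hbot _)] at hmint
    have hreal : (φ v).toReal + Q v ≤ (φ (v + t • (x - v))).toReal + Q (v + t • (x - v)) := by
      exact_mod_cast hmint
    rw [hQ] at hreal
    simp only [smul_eq_mul] at hseg_le
    have : t * (φ v).toReal ≤ t * (((φ x).toReal + ⟪s, x - v⟫) + t * c (x - v)) := by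
      nlinarith
    exact le_of_mul_le_mul_left this ht0
  have := le_of_forall_mem_Ioc_le_add_mul key
  rw [inner_neg_left]
  linarith

end SubgradientCalculus

section Augmented

variable {E F : Type*} [NormedAddCommGroup E] [InnerProductSpace ℝ E] [FiniteDimensional ℝ E]
  [NormedAddCommGroup F] [InnerProductSpace ℝ F] [FiniteDimensional ℝ F] {φ : E → EReal}

theorem hasSubgrad_neg_adjoint_of_minimizes_augmented (hconv : ConvexE φ)
    (hbot : ∀ x, φ x ≠ ⊥) (hproper : ∃ x, φ x ≠ ⊤) (T : E →ₗ[ℝ] F) (b q : F) (lam : ℝ)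
    {v : E} (hmin : ∀ v', φ v + ((⟪q, T v - b⟫ + lam / 2 * ‖T v - b‖ ^ 2 : ℝ) : EReal) ≤
      φ v' + ((⟪q, T v' - b⟫ + lam / 2 * ‖T v' - b‖ ^ 2 : ℝ) : EReal)) :
    HasSubgrad φ (-(LinearMap.adjoint T (q + lam • (T v - b)))) v := by
  have hv : φ v ≠ ⊤ := by
    obtain ⟨v₀, hv₀⟩ := hproper
    intro htop
    have := hmin v₀
    rw [htop, EReal.top_add_coe, top_le_iff] at this
    exact EReal.add_ne_top hv₀ (EReal.coe_ne_top _) this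
  refine hasSubgrad_neg_of_minimizes_add hconv hbot
    (Q := fun v => ⟪q, T v - b⟫ + lam / 2 * ‖T v - b‖ ^ 2) (c := fun h => lam / 2 * ‖T h‖ ^ 2)
    (fun h t => ?_) hv hmin
  have hT : T (v + t • h) - b = (T v - b) + t • T h := by rw [map_add, map_smul]; abel
  rw [hT, LinearMap.adjoint_inner_left, norm_add_sq_real, norm_smul, Real.norm_eq_abs, mul_pow,
    sq_abs, inner_add_right, inner_smul_right, inner_smul_right, inner_add_left, inner_smul_left]
  simp only [RCLike.conj_to_real]
  ring

end Augmented

theorem inner_le_norm_add_sq {F : Type*} [NormedAddCommGroup F] [InnerProductSpace ℝ F] (a b : F) :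
    ⟪a, b⟫ ≤ ‖a + b‖ ^ 2 := by
  nlinarith [norm_add_sq_real a b, sq_nonneg ‖a + b‖, sq_nonneg ‖a‖, sq_nonneg ‖b‖]

/-- The PMM stepsize `γ` is nonnegative: its numerator is `λ (‖X + Y‖² - ⟪X, Y⟫)` with
`X = a + b - c` and `Y = e - a`. -/
theorem pmm_stepsize_nonneg {F : Type*} [NormedAddCommGroup F] [InnerProductSpace ℝ F]
    {lam : ℝ} (hlam : 0 ≤ lam) (a b c e : F) :
    0 ≤ (lam * ‖b - c + e‖ ^ 2 + lam * ⟪c - b - a, e - a⟫) /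
      (‖a + b - c‖ ^ 2 + lam ^ 2 * ‖a - e‖ ^ 2) := by
  have hXY : b - c + e = (a + b - c) + (e - a) := by abel
  have hX : c - b - a = -(a + b - c) := by abel
  rw [hXY, hX, inner_neg_left]
  have hinner := inner_le_norm_add_sq (a + b - c) (e - a)
  have hnum : 0 ≤ lam * (‖(a + b - c) + (e - a)‖ ^ 2 - ⟪a + b - c, e - a⟫) := by
    apply mul_nonneg hlam; linarith
  apply div_nonneg (by linarith) (by positivity)

/-- `ε ≥ 0` because `ε` dominates the Jensen gap between the weighted mean of the values
`φ (p j)` and `φ pbar`. -/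
theorem hasESubgrad_weighted_average {E ι : Type*} [NormedAddCommGroup E] [InnerProductSpace ℝ E]
    {φ : E → EReal} (hconv : ConvexE φ) (hbot : ∀ x, φ x ≠ ⊥) (hproper : ∃ x, φ x ≠ ⊤)
    {s : Finset ι} {a : ι → ℝ} (ha : ∀ j ∈ s, 0 ≤ a j) {Γ : ℝ} (hΓ : Γ = ∑ j ∈ s, a j)
    (hΓpos : 0 < Γ) {p σ : ι → E} (hsub : ∀ j ∈ s, HasSubgrad φ (σ j) (p j))
    {pbar σbar : E} (hpbar : pbar = Γ⁻¹ • ∑ j ∈ s, a j • p j)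
    (hσbar : σbar = Γ⁻¹ • ∑ j ∈ s, a j • σ j)
    {ε : ℝ} (hε : ε = Γ⁻¹ * ∑ j ∈ s, a j * ⟪p j - pbar, σ j⟫) :
    0 ≤ ε ∧ HasESubgrad φ ε σbar pbar := by
  obtain ⟨x₀, hx₀⟩ := hproper
  set μ : ι → ℝ := fun j => Γ⁻¹ * a j
  have hμ : ∀ j ∈ s, 0 ≤ μ j := fun j hj => mul_nonneg (inv_nonneg.2 hΓpos.le) (ha j hj)
  have hμsum : ∑ j ∈ s, μ j = 1 := by rw [← mul_sum, ← hΓ, inv_mul_cancel₀ hΓpos.ne']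
  have hpbar' : pbar = ∑ j ∈ s, μ j • p j := by simp only [hpbar, smul_sum, smul_smul, μ]
  have hσbar' : σbar = ∑ j ∈ s, μ j • σ j := by simp only [hσbar, smul_sum, smul_smul, μ]
  have hε' : ε = ∑ j ∈ s, μ j * ⟪p j - pbar, σ j⟫ := by simp only [hε, mul_sum, mul_assoc, μ]
  have hD := hconv.convexOn_toReal hbot
  have hpD : ∀ j ∈ s, φ (p j) ≠ ⊤ := fun j hj => (hsub j hj).ne_top hx₀
  have hpbarD : φ pbar ≠ ⊤ := hpbar' ▸ hD.1.sum_mem hμ hμsum hpD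
  set R := ∑ j ∈ s, μ j * (φ (p j)).toReal
  have hjensen : (φ pbar).toReal ≤ R := hpbar' ▸ hD.map_sum_le hμ hμsum hpD
  have hlower : ∀ x, φ x ≠ ⊤ → R + ⟪σbar, x - pbar⟫ - ε ≤ (φ x).toReal := by
    intro x hx
    calc R + ⟪σbar, x - pbar⟫ - ε
        = ∑ j ∈ s, μ j * ((φ (p j)).toReal + ⟪σ j, x - p j⟫) := by
          have hsplit : ∀ j, ⟪σ j, x - p j⟫ = ⟪σ j, x - pbar⟫ - ⟪p j - pbar, σ j⟫ := fun j => by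
            rw [real_inner_comm (σ j) (p j - pbar), ← inner_sub_right, sub_sub_sub_cancel_right]
          simp only [hσbar', hε', sum_inner, real_inner_smul_left, hsplit, mul_add, mul_sub,
            sum_add_distrib, sum_sub_distrib, R]
          ring
      _ ≤ ∑ j ∈ s, μ j * (φ x).toReal :=
          sum_le_sum fun j hj => mul_le_mul_of_nonneg_left
            ((hsub j hj).toReal_add_inner_le hbot (hpD j hj) hx) (hμ j hj)
      _ = (φ x).toReal := by rw [← sum_mul, hμsum, one_mul]
  have hat_pbar := hlower pbar hpbarD
  rw [sub_self, inner_zero_right, add_zero] at hat_pbar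
  refine ⟨by linarith, ?_⟩
  intro x
  rcases eq_or_ne (φ x) ⊤ with hx | hx
  · simp [hx]
  rw [← EReal.coe_toReal hpbarD (hbot pbar), ← EReal.coe_toReal hx (hbot x)]
  exact_mod_cast (by linarith [hlower x hx] :
    (φ pbar).toReal + ⟪σbar, x - pbar⟫ - ε ≤ (φ x).toReal)

theorem pmm_ergodic_inclusions_general
    (m1 m2 n : ℕ)
    (f : EuclideanSpace ℝ (Fin m1) → EReal) (g : EuclideanSpace ℝ (Fin m2) → EReal)
    (hf : IsPCC f) (hg : IsPCC g)
    (M : EuclideanSpace ℝ (Fin m1) →ₗ[ℝ] EuclideanSpace ℝ (Fin n))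
    (C : EuclideanSpace ℝ (Fin m2) →ₗ[ℝ] EuclideanSpace ℝ (Fin n))
    (d : EuclideanSpace ℝ (Fin n))
    (lam : ℝ) (hlam : 0 < lam) (ρb : ℝ) (hρb : ρb ∈ Set.Ico (0 : ℝ) 1)
    (u : ℕ → EuclideanSpace ℝ (Fin m1)) (v : ℕ → EuclideanSpace ℝ (Fin m2))
    (z w x y : ℕ → EuclideanSpace ℝ (Fin n)) (γ ρ : ℕ → ℝ)
    (hv : ∀ k, 1 ≤ k → ∀ v' : EuclideanSpace ℝ (Fin m2),
      g (v k) + ((⟪z (k-1) + lam • w (k-1), C (v k) - d⟫ +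
          lam / 2 * ‖C (v k) - d‖ ^ 2 : ℝ) : EReal) ≤
        g v' + ((⟪z (k-1) + lam • w (k-1), C v' - d⟫ +
          lam / 2 * ‖C v' - d‖ ^ 2 : ℝ) : EReal))
    (hu : ∀ k, 1 ≤ k → ∀ u' : EuclideanSpace ℝ (Fin m1),
      f (u k) + ((⟪z (k-1) + lam • (C (v k) - d), M (u k)⟫ +
          lam / 2 * ‖M (u k)‖ ^ 2 : ℝ) : EReal) ≤
        f u' + ((⟪z (k-1) + lam • (C (v k) - d), M u'⟫ +
          lam / 2 * ‖M u'‖ ^ 2 : ℝ) : EReal))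
    (hx : ∀ k, 1 ≤ k → x k = z (k-1) + lam • w (k-1) + lam • (C (v k) - d))
    (hy : ∀ k, 1 ≤ k → y k = x k - lam • (w (k-1) - M (u k)))
    (hγ : ∀ k, 1 ≤ k → γ k = (lam * ‖C (v k) - d + w (k-1)‖ ^ 2 +
        lam * ⟪d - C (v k) - M (u k), w (k-1) - M (u k)⟫) /
      (‖M (u k) + C (v k) - d‖ ^ 2 + lam ^ 2 * ‖M (u k) - w (k-1)‖ ^ 2))
    (hρ : ∀ k, 1 ≤ k → ρ k ∈ Set.Icc (1 - ρb) (1 + ρb))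
    (Γ : ℕ → ℝ) (hΓ : ∀ k, Γ k = ∑ j ∈ Finset.Icc 1 k, ρ j * γ j)
    (ubar : ℕ → EuclideanSpace ℝ (Fin m1))
    (hubar : ∀ k, ubar k = (Γ k)⁻¹ • ∑ j ∈ Finset.Icc 1 k, (ρ j * γ j) • u j)
    (vbar : ℕ → EuclideanSpace ℝ (Fin m2))
    (hvbar : ∀ k, vbar k = (Γ k)⁻¹ • ∑ j ∈ Finset.Icc 1 k, (ρ j * γ j) • v j)
    (xbar ybar : ℕ → EuclideanSpace ℝ (Fin n))
    (hxbar : ∀ k, xbar k = (Γ k)⁻¹ • ∑ j ∈ Finset.Icc 1 k, (ρ j * γ j) • x j)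
    (hybar : ∀ k, ybar k = (Γ k)⁻¹ • ∑ j ∈ Finset.Icc 1 k, (ρ j * γ j) • y j)
    (εu εv : ℕ → ℝ)
    (hεu : ∀ k, εu k = (Γ k)⁻¹ * ∑ j ∈ Finset.Icc 1 k,
      ρ j * γ j * ⟪u j - ubar k, -(LinearMap.adjoint M (y j))⟫)
    (hεv : ∀ k, εv k = (Γ k)⁻¹ * ∑ j ∈ Finset.Icc 1 k,
      ρ j * γ j * ⟪v j - vbar k, -(LinearMap.adjoint C (x j))⟫)
    (hΓpos : ∀ k, 1 ≤ k → 0 < Γ k)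
    (k : ℕ) (hk : 1 ≤ k) :
    0 ≤ εu k ∧ 0 ≤ εv k ∧
    HasESubgrad g (εv k) (-(LinearMap.adjoint C (xbar k))) (vbar k) ∧
    HasESubgrad f (εu k) (-(LinearMap.adjoint M (ybar k))) (ubar k) := by
  have hweights : ∀ j ∈ Icc 1 k, 0 ≤ ρ j * γ j := fun j hj => by
    have hj1 := (mem_Icc.mp hj).1
    refine mul_nonneg (by linarith [(hρ j hj1).1, hρb.2]) ?_
    rw [hγ j hj1]
    exact pmm_stepsize_nonneg hlam.le _ _ _ _
  have hsubv : ∀ j ∈ Icc 1 k, HasSubgrad g (-(LinearMap.adjoint C (x j))) (v j) := fun j hj => by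
    rw [hx j (mem_Icc.mp hj).1]
    exact hasSubgrad_neg_adjoint_of_minimizes_augmented hg.2.2.2 hg.1 hg.2.1 C d _ lam
      (hv j (mem_Icc.mp hj).1)
  have hsubu : ∀ j ∈ Icc 1 k, HasSubgrad f (-(LinearMap.adjoint M (y j))) (u j) := fun j hj => by
    have hj1 := (mem_Icc.mp hj).1
    have hyj : y j = z (j - 1) + lam • (C (v j) - d) + lam • (M (u j) - 0) := by
      rw [hy j hj1, hx j hj1]; module
    rw [hyj]
    exact hasSubgrad_neg_adjoint_of_minimizes_augmented hf.2.2.2 hf.1 hf.2.1 M 0 _ lam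
      (by simpa using hu j hj1)
  have hσv : -(LinearMap.adjoint C (xbar k)) =
      (Γ k)⁻¹ • ∑ j ∈ Icc 1 k, (ρ j * γ j) • -(LinearMap.adjoint C (x j)) := by
    simp only [hxbar k, map_smul, map_sum, smul_neg, sum_neg_distrib]
  have hσu : -(LinearMap.adjoint M (ybar k)) =
      (Γ k)⁻¹ • ∑ j ∈ Icc 1 k, (ρ j * γ j) • -(LinearMap.adjoint M (y j)) := by
    simp only [hybar k, map_smul, map_sum, smul_neg, sum_neg_distrib]
  obtain ⟨hεv0, hgv⟩ := hasESubgrad_weighted_average hg.2.2.2 hg.1 hg.2.1 hweights (hΓ k)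
    (hΓpos k hk) hsubv (hvbar k) hσv (hεv k)
  obtain ⟨hεu0, hfu⟩ := hasESubgrad_weighted_average hf.2.2.2 hf.1 hf.2.1 hweights (hΓ k)
    (hΓpos k hk) hsubu (hubar k) hσu (hεu k)
  exact ⟨hεu0, hεv0, hgv, hfu⟩

/-- the ergodic quantities of the PMM satisfy the nonnegativity of the
error terms and the ε-subdifferential inclusions. -/
theorem pmm_ergodic_inclusions
    (m1 m2 n : ℕ)
    (f : EuclideanSpace ℝ (Fin m1) → EReal) (g : EuclideanSpace ℝ (Fin m2) → EReal)
    (hf : IsPCC f) (hg : IsPCC g)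
    (M : EuclideanSpace ℝ (Fin m1) →ₗ[ℝ] EuclideanSpace ℝ (Fin n))
    (C : EuclideanSpace ℝ (Fin m2) →ₗ[ℝ] EuclideanSpace ℝ (Fin n))
    (d : EuclideanSpace ℝ (Fin n))
    (lam : ℝ) (hlam : 0 < lam) (ρb : ℝ) (hρb : ρb ∈ Set.Ico (0 : ℝ) 1)
    (u : ℕ → EuclideanSpace ℝ (Fin m1)) (v : ℕ → EuclideanSpace ℝ (Fin m2))
    (z w x y : ℕ → EuclideanSpace ℝ (Fin n)) (γ ρ : ℕ → ℝ)
    (hv : ∀ k, 1 ≤ k → ∀ v' : EuclideanSpace ℝ (Fin m2),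
      g (v k) + ((⟪z (k-1) + lam • w (k-1), C (v k) - d⟫ +
          lam / 2 * ‖C (v k) - d‖ ^ 2 : ℝ) : EReal) ≤
        g v' + ((⟪z (k-1) + lam • w (k-1), C v' - d⟫ +
          lam / 2 * ‖C v' - d‖ ^ 2 : ℝ) : EReal))
    (hu : ∀ k, 1 ≤ k → ∀ u' : EuclideanSpace ℝ (Fin m1),
      f (u k) + ((⟪z (k-1) + lam • (C (v k) - d), M (u k)⟫ +
          lam / 2 * ‖M (u k)‖ ^ 2 : ℝ) : EReal) ≤
        f u' + ((⟪z (k-1) + lam • (C (v k) - d), M u'⟫ +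
          lam / 2 * ‖M u'‖ ^ 2 : ℝ) : EReal))
    (hx : ∀ k, 1 ≤ k → x k = z (k-1) + lam • w (k-1) + lam • (C (v k) - d))
    (hy : ∀ k, 1 ≤ k → y k = x k - lam • (w (k-1) - M (u k)))
    (hnz : ∀ k, 1 ≤ k → ‖M (u k) + C (v k) - d‖ + ‖M (u k) - w (k-1)‖ ≠ 0)
    (hγ : ∀ k, 1 ≤ k → γ k = (lam * ‖C (v k) - d + w (k-1)‖ ^ 2 +
        lam * ⟪d - C (v k) - M (u k), w (k-1) - M (u k)⟫) /
      (‖M (u k) + C (v k) - d‖ ^ 2 + lam ^ 2 * ‖M (u k) - w (k-1)‖ ^ 2))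
    (hρ : ∀ k, 1 ≤ k → ρ k ∈ Set.Icc (1 - ρb) (1 + ρb))
    (hz : ∀ k, 1 ≤ k → z k = z (k-1) + (ρ k * γ k) • (M (u k) + C (v k) - d))
    (hw : ∀ k, 1 ≤ k → w k = w (k-1) - (ρ k * γ k * lam) • (w (k-1) - M (u k)))
    (Γ : ℕ → ℝ) (hΓ : ∀ k, Γ k = ∑ j ∈ Finset.Icc 1 k, ρ j * γ j)
    (ubar : ℕ → EuclideanSpace ℝ (Fin m1))
    (hubar : ∀ k, ubar k = (Γ k)⁻¹ • ∑ j ∈ Finset.Icc 1 k, (ρ j * γ j) • u j)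
    (vbar : ℕ → EuclideanSpace ℝ (Fin m2))
    (hvbar : ∀ k, vbar k = (Γ k)⁻¹ • ∑ j ∈ Finset.Icc 1 k, (ρ j * γ j) • v j)
    (xbar ybar : ℕ → EuclideanSpace ℝ (Fin n))
    (hxbar : ∀ k, xbar k = (Γ k)⁻¹ • ∑ j ∈ Finset.Icc 1 k, (ρ j * γ j) • x j)
    (hybar : ∀ k, ybar k = (Γ k)⁻¹ • ∑ j ∈ Finset.Icc 1 k, (ρ j * γ j) • y j)
    (εu εv : ℕ → ℝ)
    (hεu : ∀ k, εu k = (Γ k)⁻¹ * ∑ j ∈ Finset.Icc 1 k,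
      ρ j * γ j * ⟪u j - ubar k, -(LinearMap.adjoint M (y j))⟫)
    (hεv : ∀ k, εv k = (Γ k)⁻¹ * ∑ j ∈ Finset.Icc 1 k,
      ρ j * γ j * ⟪v j - vbar k, -(LinearMap.adjoint C (x j))⟫)
    (hΓpos : ∀ k, 1 ≤ k → 0 < Γ k)
    (k : ℕ) (hk : 1 ≤ k) :
    0 ≤ εu k ∧ 0 ≤ εv k ∧
    HasESubgrad g (εv k) (-(LinearMap.adjoint C (xbar k))) (vbar k) ∧
    HasESubgrad f (εu k) (-(LinearMap.adjoint M (ybar k))) (ubar k) :=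
  pmm_ergodic_inclusions_general m1 m2 n f g hf hg M C d lam hlam ρb hρb u v z w x y γ ρ hv hu hx hy
    hγ hρ Γ hΓ ubar hubar vbar hvbar xbar ybar hxbar hybar εu εv hεu hεv hΓpos k hk
end
end

section
/- For every k ≥ 1 and every (z,w) ∈ ℝ^n×ℝ^n, the PMM sequences satisfy −Σ_{j=1}^k ρ_jγ_j φ_j(z,w) ≤ (1/2)‖(z,w)−(z_0,w_0)‖², where φ_j(z,w) = ⟨z−x_j, b_j−w⟩ + ⟨z−y_j, a_j+w⟩. -/
/-!
Write `s = M u_j + C v_j - d`, `t = w_{j-1} - M u_j`, `D = ‖s‖² + λ²‖t‖²` and let `N` be the numerator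
of `γ_j`. Expanding `x_j, y_j` shows `φ_j(z, w) = N - ⟪z - z_{j-1}, s⟫ + λ⟪w - w_{j-1}, t⟫`, an affine
function of `(z, w)` with gradient `(-s, λt)`, and `(z_j, w_j)` is the step of length `ρ_j γ_j` from
`(z_{j-1}, w_{j-1})` along `(s, -λt)`. Since `γ_j N = γ_j² D` and `ρ_j ∈ [0, 2]`, expanding the squares gives
`-ρ_j γ_j φ_j(z, w) ≤ ½‖(z, w) - (z_{j-1}, w_{j-1})‖² - ½‖(z, w) - (z_j, w_j)‖²`, and the sum telescopes.
-/

open scoped RealInnerProductSpace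

noncomputable section

open Finset

lemma sum_Icc_le_sub_of_le_sub {a V : ℕ → ℝ} (h : ∀ j, 1 ≤ j → a j ≤ V (j - 1) - V j) :
    ∀ k, ∑ j ∈ Icc 1 k, a j ≤ V 0 - V k
  | 0 => by simp
  | k + 1 => by
    rw [sum_Icc_succ_top (Nat.le_add_left 1 k)]
    have hlast := h (k + 1) (Nat.le_add_left 1 k)
    rw [Nat.add_sub_cancel] at hlast
    linarith [sum_Icc_le_sub_of_le_sub h k]

-- `D = 0` forces `γ = 0` through `x / 0 = 0`, so no case split is needed downstream.
lemma mul_eq_sq_mul_of_eq_div {γ N D : ℝ} (h : γ = N / D) : γ * N = γ ^ 2 * D := by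
  subst h
  rcases eq_or_ne D 0 with rfl | hD
  · simp
  · field_simp

section

variable {E : Type*} [NormedAddCommGroup E] [InnerProductSpace ℝ E]

lemma relaxed_step_le_half_sq_sub (s t zp wp zz ww : E) {lam γ ρ N : ℝ}
    (hγ : γ * N = γ ^ 2 * (‖s‖ ^ 2 + lam ^ 2 * ‖t‖ ^ 2)) (hρ : ρ ∈ Set.Icc (0 : ℝ) 2) :
    -(ρ * γ * (N - ⟪zz - zp, s⟫ + lam * ⟪ww - wp, t⟫)) ≤
      1 / 2 * (‖zz - zp‖ ^ 2 + ‖ww - wp‖ ^ 2) -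
        1 / 2 * (‖zz - (zp + (ρ * γ) • s)‖ ^ 2 + ‖ww - (wp - (ρ * γ * lam) • t)‖ ^ 2) := by
  have hz : ‖zz - (zp + (ρ * γ) • s)‖ ^ 2 =
      ‖zz - zp‖ ^ 2 - 2 * (ρ * γ * ⟪zz - zp, s⟫) + (ρ * γ) ^ 2 * ‖s‖ ^ 2 := by
    rw [sub_add_eq_sub_sub, norm_sub_sq_real, real_inner_smul_right, norm_smul, mul_pow,
      Real.norm_eq_abs, sq_abs]
  have hw : ‖ww - (wp - (ρ * γ * lam) • t)‖ ^ 2 =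
      ‖ww - wp‖ ^ 2 + 2 * (ρ * γ * lam * ⟪ww - wp, t⟫) + (ρ * γ * lam) ^ 2 * ‖t‖ ^ 2 := by
    rw [sub_sub_eq_add_sub, add_sub_right_comm, norm_add_sq_real, real_inner_smul_right,
      norm_smul, mul_pow, Real.norm_eq_abs, sq_abs]
  have hslack : 0 ≤ ρ * (2 - ρ) * (γ ^ 2 * (‖s‖ ^ 2 + lam ^ 2 * ‖t‖ ^ 2)) :=
    mul_nonneg (mul_nonneg hρ.1 (sub_nonneg.2 hρ.2)) (by positivity)
  rw [hz, hw]
  linear_combination hslack / 2 - ρ * hγ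

lemma pmm_gap_eq (zp wp mu cv d zz ww : E) (lam : ℝ) :
    ⟪zz - (zp + lam • wp + lam • (cv - d)), (d - cv) - ww⟫ +
        ⟪zz - ((zp + lam • wp + lam • (cv - d)) - lam • (wp - mu)), (-mu) + ww⟫ =
      (lam * ‖cv - d + wp‖ ^ 2 + lam * ⟪d - cv - mu, wp - mu⟫) -
        ⟪zz - zp, mu + cv - d⟫ + lam * ⟪ww - wp, wp - mu⟫ := by
  simp only [← real_inner_self_eq_norm_sq, inner_sub_left, inner_sub_right, inner_add_left,
    inner_add_right, real_inner_smul_left, inner_neg_right]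
  ring_nf
  linear_combination lam * real_inner_comm ww wp - lam * real_inner_comm ww mu -
    lam * real_inner_comm mu wp

lemma pmm_step_le {zp wp mu cv d x y zn wn : E} {lam γ ρ : ℝ}
    (hx : x = zp + lam • wp + lam • (cv - d)) (hy : y = x - lam • (wp - mu))
    (hγ : γ = (lam * ‖cv - d + wp‖ ^ 2 + lam * ⟪d - cv - mu, wp - mu⟫) /
      (‖mu + cv - d‖ ^ 2 + lam ^ 2 * ‖mu - wp‖ ^ 2))
    (hρ : ρ ∈ Set.Icc (0 : ℝ) 2)
    (hz : zn = zp + (ρ * γ) • (mu + cv - d)) (hw : wn = wp - (ρ * γ * lam) • (wp - mu))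
    (zz ww : E) :
    -(ρ * γ * (⟪zz - x, (d - cv) - ww⟫ + ⟪zz - y, (-mu) + ww⟫)) ≤
      1 / 2 * (‖zz - zp‖ ^ 2 + ‖ww - wp‖ ^ 2) - 1 / 2 * (‖zz - zn‖ ^ 2 + ‖ww - wn‖ ^ 2) := by
  subst hx hy hz hw
  rw [pmm_gap_eq]
  refine relaxed_step_le_half_sq_sub _ _ _ _ _ _ ?_ hρ
  rw [norm_sub_rev wp]
  exact mul_eq_sq_mul_of_eq_div hγ

end

theorem pmm_affine_sum_bound_general
    (m1 m2 n : ℕ)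
    (M : EuclideanSpace ℝ (Fin m1) →ₗ[ℝ] EuclideanSpace ℝ (Fin n))
    (C : EuclideanSpace ℝ (Fin m2) →ₗ[ℝ] EuclideanSpace ℝ (Fin n))
    (d : EuclideanSpace ℝ (Fin n))
    (lam : ℝ) (ρb : ℝ) (hρb : ρb ∈ Set.Ico (0 : ℝ) 1)
    (u : ℕ → EuclideanSpace ℝ (Fin m1)) (v : ℕ → EuclideanSpace ℝ (Fin m2))
    (z w x y : ℕ → EuclideanSpace ℝ (Fin n)) (γ ρ : ℕ → ℝ)
    (hx : ∀ k, 1 ≤ k → x k = z (k-1) + lam • w (k-1) + lam • (C (v k) - d))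
    (hy : ∀ k, 1 ≤ k → y k = x k - lam • (w (k-1) - M (u k)))
    (hγ : ∀ k, 1 ≤ k → γ k = (lam * ‖C (v k) - d + w (k-1)‖ ^ 2 +
        lam * ⟪d - C (v k) - M (u k), w (k-1) - M (u k)⟫) /
      (‖M (u k) + C (v k) - d‖ ^ 2 + lam ^ 2 * ‖M (u k) - w (k-1)‖ ^ 2))
    (hρ : ∀ k, 1 ≤ k → ρ k ∈ Set.Icc (1 - ρb) (1 + ρb))
    (hz : ∀ k, 1 ≤ k → z k = z (k-1) + (ρ k * γ k) • (M (u k) + C (v k) - d))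
    (hw : ∀ k, 1 ≤ k → w k = w (k-1) - (ρ k * γ k * lam) • (w (k-1) - M (u k)))
    (k : ℕ)
    (zz ww : EuclideanSpace ℝ (Fin n)) :
    -∑ j ∈ Finset.Icc 1 k, ρ j * γ j *
        (⟪zz - x j, (d - C (v j)) - ww⟫ + ⟪zz - y j, (-(M (u j))) + ww⟫) ≤
      1 / 2 * (‖zz - z 0‖ ^ 2 + ‖ww - w 0‖ ^ 2) := by
  have hρ02 : ∀ j, 1 ≤ j → ρ j ∈ Set.Icc (0 : ℝ) 2 := fun j hj =>
    ⟨by linarith [hρb.2, (hρ j hj).1], by linarith [hρb.2, (hρ j hj).2]⟩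
  have htele := sum_Icc_le_sub_of_le_sub
    (V := fun j => 1 / 2 * (‖zz - z j‖ ^ 2 + ‖ww - w j‖ ^ 2)) (fun j hj =>
      pmm_step_le (hx j hj) (hy j hj) (hγ j hj) (hρ02 j hj) (hz j hj) (hw j hj) zz ww) k
  rw [← Finset.sum_neg_distrib]
  have hVk : 0 ≤ ‖zz - z k‖ ^ 2 + ‖ww - w k‖ ^ 2 := by positivity
  linarith

/-- for every k ≥ 1 and every (z, w),
-Σ_{j=1}^k ρ_j γ_j φ_j(z, w) ≤ (1/2)‖(z, w) - (z₀, w₀)‖², where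
φ_j(z, w) = ⟪z - x_j, b_j - w⟫ + ⟪z - y_j, a_j + w⟫. -/
theorem pmm_affine_sum_bound
    (m1 m2 n : ℕ)
    (f : EuclideanSpace ℝ (Fin m1) → EReal) (g : EuclideanSpace ℝ (Fin m2) → EReal)
    (hf : IsPCC f) (hg : IsPCC g)
    (M : EuclideanSpace ℝ (Fin m1) →ₗ[ℝ] EuclideanSpace ℝ (Fin n))
    (C : EuclideanSpace ℝ (Fin m2) →ₗ[ℝ] EuclideanSpace ℝ (Fin n))
    (d : EuclideanSpace ℝ (Fin n))
    (lam : ℝ) (hlam : 0 < lam) (ρb : ℝ) (hρb : ρb ∈ Set.Ico (0 : ℝ) 1)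
    (u : ℕ → EuclideanSpace ℝ (Fin m1)) (v : ℕ → EuclideanSpace ℝ (Fin m2))
    (z w x y : ℕ → EuclideanSpace ℝ (Fin n)) (γ ρ : ℕ → ℝ)
    (hv : ∀ k, 1 ≤ k → ∀ v' : EuclideanSpace ℝ (Fin m2),
      g (v k) + ((⟪z (k-1) + lam • w (k-1), C (v k) - d⟫ +
          lam / 2 * ‖C (v k) - d‖ ^ 2 : ℝ) : EReal) ≤
        g v' + ((⟪z (k-1) + lam • w (k-1), C v' - d⟫ +
          lam / 2 * ‖C v' - d‖ ^ 2 : ℝ) : EReal))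
    (hu : ∀ k, 1 ≤ k → ∀ u' : EuclideanSpace ℝ (Fin m1),
      f (u k) + ((⟪z (k-1) + lam • (C (v k) - d), M (u k)⟫ +
          lam / 2 * ‖M (u k)‖ ^ 2 : ℝ) : EReal) ≤
        f u' + ((⟪z (k-1) + lam • (C (v k) - d), M u'⟫ +
          lam / 2 * ‖M u'‖ ^ 2 : ℝ) : EReal))
    (hx : ∀ k, 1 ≤ k → x k = z (k-1) + lam • w (k-1) + lam • (C (v k) - d))
    (hy : ∀ k, 1 ≤ k → y k = x k - lam • (w (k-1) - M (u k)))
    (hnz : ∀ k, 1 ≤ k → ‖M (u k) + C (v k) - d‖ + ‖M (u k) - w (k-1)‖ ≠ 0)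
    (hγ : ∀ k, 1 ≤ k → γ k = (lam * ‖C (v k) - d + w (k-1)‖ ^ 2 +
        lam * ⟪d - C (v k) - M (u k), w (k-1) - M (u k)⟫) /
      (‖M (u k) + C (v k) - d‖ ^ 2 + lam ^ 2 * ‖M (u k) - w (k-1)‖ ^ 2))
    (hρ : ∀ k, 1 ≤ k → ρ k ∈ Set.Icc (1 - ρb) (1 + ρb))
    (hz : ∀ k, 1 ≤ k → z k = z (k-1) + (ρ k * γ k) • (M (u k) + C (v k) - d))
    (hw : ∀ k, 1 ≤ k → w k = w (k-1) - (ρ k * γ k * lam) • (w (k-1) - M (u k)))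
    (k : ℕ) (hk : 1 ≤ k)
    (zz ww : EuclideanSpace ℝ (Fin n)) :
    -∑ j ∈ Finset.Icc 1 k, ρ j * γ j *
        (⟪zz - x j, (d - C (v j)) - ww⟫ + ⟪zz - y j, (-(M (u j))) + ww⟫) ≤
      1 / 2 * (‖zz - z 0‖ ^ 2 + ‖ww - w 0‖ ^ 2) :=
  pmm_affine_sum_bound_general m1 m2 n M C d lam ρb hρb u v z w x y γ ρ hx hy hγ hρ hz hw k zz ww
end
end
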